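/- A positive integer n is representable as n = a² + ab + b² with a and b coprime integers if and only if: (1) if 3^t divides n then t ≤ 1, and (2) every prime r ≠ 3 dividing n satisfies r ≡ 1 mod 3. -/

import Mathlib

/-!
A coprime pair `(a, b)` with `n = a² + ab + b²` yields, through `b⁻¹ mod n`, a root of
`x² + x + 1` modulo `n`. Conversely a root `x` yields the form
`n X² + (2x + 1) XY + ((x² + x + 1)/n) Y²` of discriminant `-3`, which represents `n` at `(1, 0)`
and reduces to `X² + XY + Y²`. So `n` is a primitive norm iff `x² + x + 1` has a root mod `n`,
and by the Chinese remainder theorem this is decided on prime powers: there is a root mod `3`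
but none mod `9`, and for `p ≠ 3` a root mod `p` has order `3` in `(ZMod p)ˣ`, forcing
`p ≡ 1 mod 3`. If `p ≡ 1 mod 3`, an element `y` of order `3` in `(ZMod (p ^ k))ˣ` is a root: since
`3 = (y² + y + 1) - (y - 1)(y + 2)` is a unit, `y - 1` or `y² + y + 1` is a unit, and it must be
`y - 1` because `(y - 1)(y² + y + 1) = 0`.
-/

def IsPrimitiveEisensteinNorm (n : ℤ) : Prop :=
  ∃ a b : ℤ, IsCoprime a b ∧ n = a ^ 2 + a * b + b ^ 2

def HasCyclotomicThreeRoot (n : ℕ) : Prop :=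
  ∃ x : ZMod n, x ^ 2 + x + 1 = 0

theorem IsPrimitiveEisensteinNorm.of_discr_eq_neg_three {A B C : ℤ} (hA : 0 < A)
    (hdisc : B ^ 2 - 4 * A * C = -3) {u v : ℤ} (huv : IsCoprime u v) :
    IsPrimitiveEisensteinNorm (A * u ^ 2 + B * u * v + C * v ^ 2) := by
  -- the substitution `u ↦ u - k v` moves the middle coefficient into `(-A, A]`
  obtain ⟨k, hk⟩ : ∃ k : ℤ, -A < B + 2 * A * k ∧ B + 2 * A * k ≤ A := by
    refine ⟨(A - B) / (2 * A), ?_⟩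
    have := Int.mul_ediv_add_emod (A - B) (2 * A)
    have := Int.emod_nonneg (A - B) (by omega : 2 * A ≠ 0)
    have := Int.emod_lt_of_pos (A - B) (by omega : 0 < 2 * A)
    constructor <;> linarith
  obtain ⟨B', C', hB', hdisc', hvalue⟩ : ∃ B' C' : ℤ, (-A < B' ∧ B' ≤ A) ∧
      B' ^ 2 - 4 * A * C' = -3 ∧
      A * u ^ 2 + B * u * v + C * v ^ 2 = A * (u - k * v) ^ 2 + B' * (u - k * v) * v + C' * v ^ 2 :=
    ⟨_, A * k ^ 2 + B * k + C, hk, by linear_combination hdisc, by ring⟩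
  have huv' : IsCoprime (u - k * v) v := by
    simpa [sub_eq_add_neg] using huv.add_mul_right_left (-k)
  rw [hvalue]
  by_cases hC' : A ≤ C'
  · -- `4A² ≤ 4AC' = B'² + 3 ≤ A² + 3`
    have hA1 : A = 1 := by nlinarith
    subst hA1
    obtain rfl : B' = 1 := by nlinarith
    obtain rfl : C' = 1 := by omega
    exact ⟨u - k * v, v, huv', by ring⟩
  · have hC'pos : 0 < C' := by nlinarith
    have := of_discr_eq_neg_three hC'pos (B := -B') (C := A) (by linear_combination hdisc')
      (u := v) (v := -(u - k * v)) huv'.symm.neg_right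
    convert this using 1
    ring
termination_by A.toNat
decreasing_by omega

theorem IsPrimitiveEisensteinNorm.hasCyclotomicThreeRoot {n : ℕ}
    (h : IsPrimitiveEisensteinNorm n) : HasCyclotomicThreeRoot n := by
  obtain ⟨a, b, hab, hn⟩ := h
  obtain ⟨s, t, hst⟩ : IsCoprime b n := by
    rw [hn, show a ^ 2 + a * b + b ^ 2 = a ^ 2 + b * (a + b) by ring]
    exact hab.symm.pow_right.add_mul_left_right _
  have hsb : (s : ZMod n) * b = 1 := by
    simpa using congrArg (Int.cast : ℤ → ZMod n) hst
  have hnorm : (a : ZMod n) ^ 2 + a * b + b ^ 2 = 0 := by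
    simpa using (congrArg (Int.cast : ℤ → ZMod n) hn).symm
  exact ⟨a * s, by linear_combination s ^ 2 * hnorm - (a * s + 1 + s * b) * hsb⟩

theorem HasCyclotomicThreeRoot.isPrimitiveEisensteinNorm {n : ℕ} (hn : 0 < n)
    (h : HasCyclotomicThreeRoot n) : IsPrimitiveEisensteinNorm n := by
  have : NeZero n := ⟨hn.ne'⟩
  obtain ⟨x, hx⟩ := h
  obtain ⟨c, hc⟩ : (n : ℤ) ∣ (x.val : ℤ) ^ 2 + x.val + 1 := by
    rw [← ZMod.intCast_zmod_eq_zero_iff_dvd]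
    push_cast
    rwa [ZMod.natCast_zmod_val]
  simpa using IsPrimitiveEisensteinNorm.of_discr_eq_neg_three (B := 2 * x.val + 1) (C := c)
    (by exact_mod_cast hn) (by linear_combination 4 * hc) (isCoprime_one_left (x := 0))

theorem HasCyclotomicThreeRoot.of_dvd {m n : ℕ} (h : m ∣ n) (hn : HasCyclotomicThreeRoot n) :
    HasCyclotomicThreeRoot m := by
  obtain ⟨x, hx⟩ := hn
  have := congrArg (ZMod.castHom h (ZMod m)) hx
  rw [map_add, map_add, map_pow, map_one, map_zero] at this
  exact ⟨_, this⟩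

theorem HasCyclotomicThreeRoot.mul {m k : ℕ} (h : m.Coprime k) (hm : HasCyclotomicThreeRoot m)
    (hk : HasCyclotomicThreeRoot k) : HasCyclotomicThreeRoot (m * k) := by
  obtain ⟨x, hx⟩ := hm
  obtain ⟨y, hy⟩ := hk
  refine ⟨(ZMod.chineseRemainder h).symm (x, y), (ZMod.chineseRemainder h).injective ?_⟩
  simp only [map_add, map_pow, map_one, map_zero, RingEquiv.apply_symm_apply]
  exact Prod.ext hx hy

theorem HasCyclotomicThreeRoot.not_nine_dvd {n : ℕ} (h : HasCyclotomicThreeRoot n) : ¬ 9 ∣ n :=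
  fun h9 => by
    obtain ⟨y, hy⟩ := h.of_dvd h9
    revert y
    decide

theorem Nat.Prime.mod_three_eq_one_of_hasCyclotomicThreeRoot {r : ℕ} (hr : r.Prime) (hr3 : r ≠ 3)
    (h : HasCyclotomicThreeRoot r) : r % 3 = 1 := by
  have := Fact.mk hr
  obtain ⟨x, hx⟩ := h
  have hx1 : x ≠ 1 := by
    rintro rfl
    have : ((3 : ℕ) : ZMod r) = 0 := by push_cast; linear_combination hx
    rw [ZMod.natCast_eq_zero_iff] at this
    exact hr3 ((Nat.prime_dvd_prime_iff_eq hr Nat.prime_three).mp this)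
  have hord : orderOf x = 3 := orderOf_eq_prime (by linear_combination (x - 1) * hx) hx1
  have hdvd := ZMod.orderOf_dvd_card_sub_one (a := x) (by rintro rfl; norm_num at hx)
  rw [hord] at hdvd
  have := hr.two_le
  omega

theorem ZMod.isUnit_of_castHom_ne_zero {p k : ℕ} (hp : p.Prime) (hk : 0 < k) {z : ZMod (p ^ k)}
    (hz : ZMod.castHom (dvd_pow_self p hk.ne') (ZMod p) z ≠ 0) : IsUnit z := by
  have : NeZero (p ^ k) := ⟨pow_ne_zero k hp.ne_zero⟩
  rw [← ZMod.natCast_zmod_val z, map_natCast, Ne, ZMod.natCast_eq_zero_iff] at hz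
  rw [← ZMod.natCast_zmod_val z, ZMod.isUnit_natCast_iff_not_dvd_pow hp hk]
  exact hz

theorem hasCyclotomicThreeRoot_prime_pow {p k : ℕ} (hp : p.Prime) (hp3 : p % 3 = 1) (hk : 0 < k) :
    HasCyclotomicThreeRoot (p ^ k) := by
  have := Fact.mk hp
  have h3 : 3 ∣ Fintype.card (ZMod (p ^ k))ˣ := by
    rw [ZMod.card_units_eq_totient, Nat.totient_prime_pow hp hk]
    exact Dvd.dvd.mul_left (by omega) _
  obtain ⟨u, hu⟩ := exists_prime_orderOf_dvd_card 3 h3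
  have hy3 : (u : ZMod (p ^ k)) ^ 3 = 1 := by
    rw [← Units.val_pow_eq_pow_val, ← hu, pow_orderOf_eq_one, Units.val_one]
  have hy1 : (u : ZMod (p ^ k)) ≠ 1 := by
    intro h
    rw [Units.val_eq_one.mp h, orderOf_one] at hu
    omega
  set y : ZMod (p ^ k) := ↑u
  set π := ZMod.castHom (dvd_pow_self p hk.ne') (ZMod p)
  have hfactor : (y - 1) * (y ^ 2 + y + 1) = 0 := by linear_combination hy3
  by_cases hy : π (y - 1) = 0
  · have h3p : π (y ^ 2 + y + 1) ≠ 0 := by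
      have : ((3 : ℕ) : ZMod p) ≠ 0 := by
        rw [Ne, ZMod.natCast_eq_zero_iff, Nat.dvd_prime Nat.prime_three]
        have := hp.two_le
        omega
      rw [show y ^ 2 + y + 1 = 3 + (y - 1) * (y + 2) by ring, map_add, map_mul, hy, zero_mul,
        add_zero, map_ofNat]
      exact_mod_cast this
    have := (ZMod.isUnit_of_castHom_ne_zero hp hk h3p).mul_left_eq_zero.mp hfactor
    exact absurd (sub_eq_zero.mp this) hy1
  · exact ⟨y, (ZMod.isUnit_of_castHom_ne_zero hp hk hy).mul_right_eq_zero.mp hfactor⟩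

theorem hasCyclotomicThreeRoot_of_forall_prime_dvd {n : ℕ} (hn : 0 < n) (h9 : ¬ 9 ∣ n)
    (hprime : ∀ r : ℕ, r.Prime → r ∣ n → r ≠ 3 → r % 3 = 1) : HasCyclotomicThreeRoot n := by
  induction n using Nat.recOnPrimeCoprime with
  | zero => omega
  | prime_pow p k hp =>
    rcases k.eq_zero_or_pos with rfl | hk
    · exact ⟨0, Subsingleton.elim (α := ZMod 1) _ _⟩
    by_cases hp3 : p = 3
    · subst hp3
      obtain rfl : k = 1 := by
        by_contra hk1
        exact h9 ((by norm_num : 9 ∣ 3 ^ 2).trans (pow_dvd_pow 3 (by omega)))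
      exact ⟨1, by decide⟩
    · exact hasCyclotomicThreeRoot_prime_pow hp (hprime p hp (dvd_pow_self p hk.ne') hp3) hk
  | coprime a b ha hb hab iha ihb =>
    exact (iha (by omega) (fun h => h9 (h.mul_right b))
        fun r hr hra => hprime r hr (hra.mul_right b)).mul hab
      (ihb (by omega) (fun h => h9 (h.mul_left a)) fun r hr hrb => hprime r hr (hrb.mul_left a))

theorem hasCyclotomicThreeRoot_iff {n : ℕ} (hn : 0 < n) :
    HasCyclotomicThreeRoot n ↔ ¬ 9 ∣ n ∧ ∀ r : ℕ, r.Prime → r ∣ n → r ≠ 3 → r % 3 = 1 :=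
  ⟨fun h => ⟨h.not_nine_dvd, fun _ hr hrn hr3 =>
      hr.mod_three_eq_one_of_hasCyclotomicThreeRoot hr3 (h.of_dvd hrn)⟩,
    fun ⟨h9, hprime⟩ => hasCyclotomicThreeRoot_of_forall_prime_dvd hn h9 hprime⟩

/-- A positive integer `n` is representable as `n = a² + ab + b²` with `a` and `b`
coprime integers if and only if: (1) if `3^t` divides `n` then `t ≤ 1`, and (2) every
prime `r ≠ 3` dividing `n` satisfies `r ≡ 1 mod 3`. -/
theorem stmt5 (n : ℕ) (hn : 0 < n) :
    (∃ a b : ℤ, IsCoprime a b ∧ (n : ℤ) = a^2 + a*b + b^2) ↔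
      ((∀ t : ℕ, 3^t ∣ n → t ≤ 1) ∧
        (∀ r : ℕ, r.Prime → r ∣ n → r ≠ 3 → r % 3 = 1)) := by
  have hthree : (∀ t : ℕ, 3 ^ t ∣ n → t ≤ 1) ↔ ¬ 9 ∣ n :=
    ⟨fun h h9 => absurd (h 2 h9) (by norm_num),
      fun h t ht => by by_contra! ht2; exact h ((pow_dvd_pow 3 ht2).trans ht)⟩
  rw [hthree, ← hasCyclotomicThreeRoot_iff hn]
  exact ⟨IsPrimitiveEisensteinNorm.hasCyclotomicThreeRoot,
    HasCyclotomicThreeRoot.isPrimitiveEisensteinNorm hn⟩
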